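/- (Soundness of LNS_Kt) For every linear nested sequent S, if S is derivable in the calculus LNS_Kt, then its formula translation τ(S) is valid, i.e., forced at every world of every Kripke model. -/

import Mathlib

/-- Formulae of tense logic: atoms (indexed by naturals), ⊥, →, □, ◇, ■, ◆. -/
inductive Formula : Type
  | atom : ℕ → Formula
  | bot : Formula
  | imp : Formula → Formula → Formula
  | box : Formula → Formula
  | dia : Formula → Formula
  | bbox : Formula → Formula
  | bdia : Formula → Formula

def Formula.neg (A : Formula) : Formula := A.imp .bot
def Formula.and (A B : Formula) : Formula := (A.imp B.neg).neg
def Formula.or (A B : Formula) : Formula := A.neg.imp B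
def Formula.top : Formula := Formula.bot.imp .bot

/-- Formulas built from atoms, ⊥, →, □, ■ only (no diamonds). -/
def Formula.NoDia : Formula → Prop
  | .atom _ => True
  | .bot => True
  | .imp A B => A.NoDia ∧ B.NoDia
  | .box A => A.NoDia
  | .dia _ => False
  | .bbox A => A.NoDia
  | .bdia _ => False

/-- Structural connectives: `up` is ↗ and `dn` is ↙. -/
inductive Dir : Type
  | up
  | dn

/-- Linear nested sequents: a nonempty list of components `Γ ⇒ Δ`
joined by the structural connectives ↗ (`up`) and ↙ (`dn`). -/
inductive LNS : Type
  | single (Γ Δ : Multiset Formula) : LNS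
  | up (Γ Δ : Multiset Formula) (S : LNS) : LNS
  | dn (Γ Δ : Multiset Formula) (S : LNS) : LNS

/-- A (possibly empty) context: a list of components, each together with the
structural connective joining it to what follows. -/
abbrev Ctx := List (Multiset Formula × Multiset Formula × Dir)

/-- `plug G S` is the linear nested sequent `G ⇗ S` (just `S` when `G` is empty). -/
def plug : Ctx → LNS → LNS
  | [], S => S
  | (Γ, Δ, Dir.up) :: G, S => LNS.up Γ Δ (plug G S)
  | (Γ, Δ, Dir.dn) :: G, S => LNS.dn Γ Δ (plug G S)

/-- The structural connective joining the context to what follows it (none if empty). -/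
def lastDir : Ctx → Option Dir
  | [] => none
  | [(_, _, d)] => some d
  | _ :: G => lastDir G

/-- Kripke forcing for tense logic. -/
def Force {W : Type} (R : W → W → Prop) (V : W → ℕ → Prop) : W → Formula → Prop
  | w, .atom p => V w p
  | _, .bot => False
  | w, .imp A B => Force R V w A → Force R V w B
  | w, .box A => ∀ v, R w v → Force R V v A
  | w, .dia A => ∃ v, R w v ∧ Force R V v A
  | w, .bbox A => ∀ v, R v w → Force R V v A
  | w, .bdia A => ∃ v, R v w ∧ Force R V v A

/-- Conjunction of a finite multiset of formulae (empty conjunction is ⊤). -/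
noncomputable def bigAnd (Γ : Multiset Formula) : Formula :=
  Γ.toList.foldr Formula.and Formula.top

/-- Disjunction of a finite multiset of formulae (empty disjunction is ⊥). -/
noncomputable def bigOr (Δ : Multiset Formula) : Formula :=
  Δ.toList.foldr Formula.or Formula.bot

/-- The formula translation τ of a linear nested sequent. -/
noncomputable def tau : LNS → Formula
  | .single Γ Δ => (bigAnd Γ).imp (bigOr Δ)
  | .up Γ Δ S => (bigAnd Γ).imp ((bigOr Δ).or (tau S).box)
  | .dn Γ Δ S => (bigAnd Γ).imp ((bigOr Δ).or (tau S).bbox)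

/-- A formula is valid if it is forced at every world of every Kripke model. -/
def Valid (A : Formula) : Prop :=
  ∀ (W : Type) (_ : Nonempty W) (R : W → W → Prop) (V : W → ℕ → Prop) (w : W),
    Force R V w A

/-- A linear nested sequent is falsifiable if its formula translation fails at
some world of some Kripke model. -/
def Falsifiable (S : LNS) : Prop :=
  ∃ (W : Type) (_ : Nonempty W) (R : W → W → Prop) (V : W → ℕ → Prop) (w : W),
    ¬ Force R V w (tau S)

/-- The calculus LNS_Kt. -/
inductive Deriv : LNS → Prop
  | id (G : Ctx) (Γ Δ : Multiset Formula) (p : ℕ) :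
      Deriv (plug G (.single (.atom p ::ₘ Γ) (.atom p ::ₘ Δ)))
  | botL (G : Ctx) (Γ Δ : Multiset Formula) :
      Deriv (plug G (.single (.bot ::ₘ Γ) Δ))
  | ew (G : Ctx) (Θ Λ : Multiset Formula) (d : Dir) (Γ Δ : Multiset Formula) :
      Deriv (plug G (.single Θ Λ)) →
      Deriv (plug (G ++ [(Θ, Λ, d)]) (.single Γ Δ))
  | impR (G : Ctx) (Γ Δ : Multiset Formula) (A B : Formula) :
      Deriv (plug G (.single (A ::ₘ Γ) (B ::ₘ A.imp B ::ₘ Δ))) →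
      Deriv (plug G (.single Γ (A.imp B ::ₘ Δ)))
  | impL (G : Ctx) (Γ Δ : Multiset Formula) (A B : Formula) :
      Deriv (plug G (.single (B ::ₘ A.imp B ::ₘ Γ) Δ)) →
      Deriv (plug G (.single (A.imp B ::ₘ Γ) (A ::ₘ Δ))) →
      Deriv (plug G (.single (A.imp B ::ₘ Γ) Δ))
  | boxR1 (G : Ctx) (Γ Δ Θ Λ : Multiset Formula) (A : Formula) :
      Deriv (plug G (.dn Γ (A ::ₘ Δ) (.single Θ (A.box ::ₘ Λ)))) →
      Deriv (plug G (.dn Γ Δ (.up Θ (A.box ::ₘ Λ) (.single 0 {A})))) →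
      Deriv (plug G (.dn Γ Δ (.single Θ (A.box ::ₘ Λ))))
  | bboxR1 (G : Ctx) (Γ Δ Θ Λ : Multiset Formula) (A : Formula) :
      Deriv (plug G (.up Γ (A ::ₘ Δ) (.single Θ (A.bbox ::ₘ Λ)))) →
      Deriv (plug G (.up Γ Δ (.dn Θ (A.bbox ::ₘ Λ) (.single 0 {A})))) →
      Deriv (plug G (.up Γ Δ (.single Θ (A.bbox ::ₘ Λ))))
  | boxR2 (G : Ctx) (Γ Δ : Multiset Formula) (A : Formula) :
      lastDir G ≠ some Dir.dn →
      Deriv (plug G (.up Γ (A.box ::ₘ Δ) (.single 0 {A}))) →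
      Deriv (plug G (.single Γ (A.box ::ₘ Δ)))
  | bboxR2 (G : Ctx) (Γ Δ : Multiset Formula) (A : Formula) :
      lastDir G ≠ some Dir.up →
      Deriv (plug G (.dn Γ (A.bbox ::ₘ Δ) (.single 0 {A}))) →
      Deriv (plug G (.single Γ (A.bbox ::ₘ Δ)))
  | boxL1 (G : Ctx) (Γ Δ Θ Λ : Multiset Formula) (A : Formula) :
      Deriv (plug G (.up (A.box ::ₘ Γ) Δ (.single (A ::ₘ Θ) Λ))) →
      Deriv (plug G (.up (A.box ::ₘ Γ) Δ (.single Θ Λ)))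
  | bboxL1 (G : Ctx) (Γ Δ Θ Λ : Multiset Formula) (A : Formula) :
      Deriv (plug G (.dn (A.bbox ::ₘ Γ) Δ (.single (A ::ₘ Θ) Λ))) →
      Deriv (plug G (.dn (A.bbox ::ₘ Γ) Δ (.single Θ Λ)))
  | boxL2 (G : Ctx) (Γ Δ Θ Λ : Multiset Formula) (A : Formula) :
      Deriv (plug G (.single (A ::ₘ Γ) Δ)) →
      Deriv (plug G (.dn Γ Δ (.single (A.box ::ₘ Θ) Λ)))
  | bboxL2 (G : Ctx) (Γ Δ Θ Λ : Multiset Formula) (A : Formula) :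
      Deriv (plug G (.single (A ::ₘ Γ) Δ)) →
      Deriv (plug G (.up Γ Δ (.single (A.bbox ::ₘ Θ) Λ)))

/-!
Every rule is locally sound: at any world of any model where the translations of its premises
hold, so does the translation of its conclusion. The translation of `G ⇗ S` is obtained from
`τ S` by iterating `X ↦ ⋀Γ → ⋁Δ ∨ □X` and `X ↦ ⋀Γ → ⋁Δ ∨ ■X`, which are monotone and commute
with finite conjunctions, so local soundness lifts through every context `G`; soundness then
follows by induction on derivations.
-/

theorem plug_append (G₁ G₂ : Ctx) (S : LNS) : plug (G₁ ++ G₂) S = plug G₁ (plug G₂ S) := by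
  induction G₁ with
  | nil => rfl
  | cons C G ih => obtain ⟨Γ, Δ, _ | _⟩ := C <;> simp only [List.cons_append, plug, ih]

section Semantics

variable {W : Type} {R : W → W → Prop} {V : W → ℕ → Prop} {w : W}

@[simp]
theorem force_bot : ¬ Force R V w .bot := id

@[simp]
theorem force_imp {A B : Formula} :
    Force R V w (A.imp B) ↔ (Force R V w A → Force R V w B) := Iff.rfl

@[simp]
theorem force_box {A : Formula} : Force R V w A.box ↔ ∀ v, R w v → Force R V v A := Iff.rfl

@[simp]
theorem force_bbox {A : Formula} : Force R V w A.bbox ↔ ∀ v, R v w → Force R V v A := Iff.rfl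

@[simp]
theorem force_and {A B : Formula} :
    Force R V w (A.and B) ↔ Force R V w A ∧ Force R V w B := by
  simp only [Formula.and, Formula.neg, force_imp, force_bot]
  tauto

@[simp]
theorem force_or {A B : Formula} :
    Force R V w (A.or B) ↔ Force R V w A ∨ Force R V w B := by
  simp only [Formula.or, Formula.neg, force_imp, force_bot]
  tauto

@[simp]
theorem force_top : Force R V w .top := id

@[simp]
theorem force_bigAnd {Γ : Multiset Formula} :
    Force R V w (bigAnd Γ) ↔ ∀ A ∈ Γ, Force R V w A := by
  suffices ∀ l : List Formula, Force R V w (l.foldr .and .top) ↔ ∀ A ∈ l, Force R V w A by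
    simpa [bigAnd] using this Γ.toList
  intro l
  induction l <;> simp_all

@[simp]
theorem force_bigOr {Δ : Multiset Formula} :
    Force R V w (bigOr Δ) ↔ ∃ A ∈ Δ, Force R V w A := by
  suffices ∀ l : List Formula, Force R V w (l.foldr .or .bot) ↔ ∃ A ∈ l, Force R V w A by
    simpa [bigOr] using this Δ.toList
  intro l
  induction l <;> simp_all

@[simp]
theorem force_tau_single {Γ Δ : Multiset Formula} :
    Force R V w (tau (.single Γ Δ)) ↔
      ((∀ A ∈ Γ, Force R V w A) → ∃ B ∈ Δ, Force R V w B) := by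
  simp [tau]

@[simp]
theorem force_tau_up {Γ Δ : Multiset Formula} {S : LNS} :
    Force R V w (tau (.up Γ Δ S)) ↔
      ((∀ A ∈ Γ, Force R V w A) →
        (∃ B ∈ Δ, Force R V w B) ∨ ∀ v, R w v → Force R V v (tau S)) := by
  simp [tau]

@[simp]
theorem force_tau_dn {Γ Δ : Multiset Formula} {S : LNS} :
    Force R V w (tau (.dn Γ Δ S)) ↔
      ((∀ A ∈ Γ, Force R V w A) →
        (∃ B ∈ Δ, Force R V w B) ∨ ∀ v, R v w → Force R V v (tau S)) := by
  simp [tau]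

theorem force_tau_plug_of_forall (G : Ctx) {Ss : List LNS} {T : LNS}
    (h : ∀ v, (∀ S ∈ Ss, Force R V v (tau S)) → Force R V v (tau T))
    (hSs : ∀ S ∈ Ss, Force R V w (tau (plug G S))) : Force R V w (tau (plug G T)) := by
  induction G generalizing w with
  | nil => exact h w hSs
  | cons C G ih =>
    obtain ⟨Γ, Δ, _ | _⟩ := C
    all_goals
      simp only [plug, force_tau_up, force_tau_dn] at hSs ⊢
      intro hΓ
      by_cases hΔ : ∃ B ∈ Δ, Force R V w B
      · exact .inl hΔ
      · exact .inr fun v hv => ih fun S hS => ((hSs S hS hΓ).resolve_left hΔ) v hv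

end Semantics

def Entails (Ss : List LNS) (T : LNS) : Prop :=
  ∀ (W : Type) (R : W → W → Prop) (V : W → ℕ → Prop) (w : W),
    (∀ S ∈ Ss, Force R V w (tau S)) → Force R V w (tau T)

theorem Entails.valid_plug {Ss : List LNS} {T : LNS} (h : Entails Ss T) (G : Ctx)
    (hSs : ∀ S ∈ Ss, Valid (tau (plug G S))) : Valid (tau (plug G T)) :=
  fun W _ R V w => force_tau_plug_of_forall G (h W R V) fun S hS => hSs S hS W ‹_› R V w

section Rules

variable {Γ Δ Θ Λ : Multiset Formula} {A B : Formula}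

theorem entails_id (p : ℕ) : Entails [] (.single (.atom p ::ₘ Γ) (.atom p ::ₘ Δ)) := by
  intro W R V w; simp; grind

theorem entails_botL : Entails [] (.single (.bot ::ₘ Γ) Δ) := by
  intro W R V w; simp

theorem entails_ew (d : Dir) : Entails [.single Θ Λ] (plug [(Θ, Λ, d)] (.single Γ Δ)) := by
  intro W R V w; cases d <;> simp [plug] <;> grind

theorem entails_impR :
    Entails [.single (A ::ₘ Γ) (B ::ₘ A.imp B ::ₘ Δ)] (.single Γ (A.imp B ::ₘ Δ)) := by
  intro W R V w; simp; grind

theorem entails_impL :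
    Entails [.single (B ::ₘ A.imp B ::ₘ Γ) Δ, .single (A.imp B ::ₘ Γ) (A ::ₘ Δ)]
      (.single (A.imp B ::ₘ Γ) Δ) := by
  intro W R V w; simp; grind

theorem entails_boxR1 :
    Entails [.dn Γ Δ (.up Θ (A.box ::ₘ Λ) (.single 0 {A}))] (.dn Γ Δ (.single Θ (A.box ::ₘ Λ))) := by
  intro W R V w; simp; grind

theorem entails_bboxR1 :
    Entails [.up Γ Δ (.dn Θ (A.bbox ::ₘ Λ) (.single 0 {A}))] (.up Γ Δ (.single Θ (A.bbox ::ₘ Λ))) := by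
  intro W R V w; simp; grind

theorem entails_boxR2 : Entails [.up Γ (A.box ::ₘ Δ) (.single 0 {A})] (.single Γ (A.box ::ₘ Δ)) := by
  intro W R V w; simp; grind

theorem entails_bboxR2 : Entails [.dn Γ (A.bbox ::ₘ Δ) (.single 0 {A})] (.single Γ (A.bbox ::ₘ Δ)) := by
  intro W R V w; simp; grind

theorem entails_boxL1 :
    Entails [.up (A.box ::ₘ Γ) Δ (.single (A ::ₘ Θ) Λ)] (.up (A.box ::ₘ Γ) Δ (.single Θ Λ)) := by
  intro W R V w; simp; grind

theorem entails_bboxL1 :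
    Entails [.dn (A.bbox ::ₘ Γ) Δ (.single (A ::ₘ Θ) Λ)] (.dn (A.bbox ::ₘ Γ) Δ (.single Θ Λ)) := by
  intro W R V w; simp; grind

theorem entails_boxL2 : Entails [.single (A ::ₘ Γ) Δ] (.dn Γ Δ (.single (A.box ::ₘ Θ) Λ)) := by
  intro W R V w; simp; grind

theorem entails_bboxL2 : Entails [.single (A ::ₘ Γ) Δ] (.up Γ Δ (.single (A.bbox ::ₘ Θ) Λ)) := by
  intro W R V w; simp; grind

end Rules

/-- Soundness of LNS_Kt: if a linear nested sequent is derivable, then its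
formula translation is valid. -/
theorem lnskt_sound (S : LNS) (h : Deriv S) : Valid (tau S) := by
  induction h with
  | id G _ _ p => exact (entails_id p).valid_plug G (by simp)
  | botL G => exact entails_botL.valid_plug G (by simp)
  | ew G _ _ d _ _ _ ih => exact plug_append .. ▸ (entails_ew d).valid_plug G (by simpa)
  | impR G _ _ _ _ _ ih => exact entails_impR.valid_plug G (by simpa)
  | impL G _ _ _ _ _ _ ih₁ ih₂ => exact entails_impL.valid_plug G (by simp [ih₁, ih₂])
  | boxR1 G _ _ _ _ _ _ _ _ ih => exact entails_boxR1.valid_plug G (by simpa)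
  | bboxR1 G _ _ _ _ _ _ _ _ ih => exact entails_bboxR1.valid_plug G (by simpa)
  | boxR2 G _ _ _ _ _ ih => exact entails_boxR2.valid_plug G (by simpa)
  | bboxR2 G _ _ _ _ _ ih => exact entails_bboxR2.valid_plug G (by simpa)
  | boxL1 G _ _ _ _ _ _ ih => exact entails_boxL1.valid_plug G (by simpa)
  | bboxL1 G _ _ _ _ _ _ ih => exact entails_bboxL1.valid_plug G (by simpa)
  | boxL2 G _ _ _ _ _ _ ih => exact entails_boxL2.valid_plug G (by simpa)
  | bboxL2 G _ _ _ _ _ _ ih => exact entails_bboxL2.valid_plug G (by simpa)
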